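/- Let R be an integrally closed domain, f ∈ R nonzero, and S = R[u,v]/(uv - f). If φ ∈ Frac(S) satisfies φ = g/u^d = h/v^d for some d ≥ 0, g ∈ R[u] (viewed in S), and h ∈ R[v] (viewed in S), then φ ∈ S. -/

import Mathlib

set_option synthInstance.maxHeartbeats 1000000
set_option maxHeartbeats 1000000

open MvPolynomial

/-- The suspension ring `S = R[u,v]/(uv - f)`. -/
abbrev Susp (R : Type*) [CommRing R] (f : R) : Type _ :=
  MvPolynomial (Fin 2) R ⧸
    Ideal.span {(X 0 * X 1 - C f : MvPolynomial (Fin 2) R)}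

/-- The image of the variable `u` in `S`. -/
noncomputable abbrev suspU (R : Type*) [CommRing R] (f : R) : Susp R f :=
  Ideal.Quotient.mk _ (X 0)

/-- The image of the variable `v` in `S`. -/
noncomputable abbrev suspV (R : Type*) [CommRing R] (f : R) : Susp R f :=
  Ideal.Quotient.mk _ (X 1)

/-!
Sending `u ↦ f T⁻¹`, `v ↦ T` embeds `S` into `R[T,T⁻¹]`: every element of `S` is `p(u) + q(v)`,
and its image `p(f T⁻¹) + q(T)` vanishes only when `p` and `q` are constants summing to zero,
because `f` is a nonzero divisor. A Laurent polynomial lies in the image as soon as its coefficient at `T⁻ᵏ` is divisible by `fᵏ`.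

Clearing denominators gives `g vᵈ = h uᵈ` in `S`. For `g = p(u)`, `h = q(v)` and
`ψ := q(T) T⁻ᵈ` this reads `fᵈ T⁻ᵈ ψ = p(f T⁻¹)` in `R[T,T⁻¹]`, so the coefficient of `ψ`
at `T⁻ᵏ` is `fᵏ` times the coefficient of `p` at `k + d`. Hence `ψ` is the image of some
`s ∈ S`, so `h = s vᵈ`, and `φ = h / vᵈ = s`.
-/

open LaurentPolynomial
open scoped Polynomial

section Semiring

variable {R : Type*} [Semiring R]

lemma Polynomial.coeff_toLaurent_natCast (p : R[X]) (n : ℕ) :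
    (toLaurent p).coeff n = p.coeff n :=
  Finsupp.mapDomain_apply Nat.cast_injective p.toFinsupp.coeff n

lemma Polynomial.coeff_toLaurent_of_neg (p : R[X]) {m : ℤ} (hm : m < 0) :
    (toLaurent p).coeff m = 0 :=
  Finsupp.mapDomain_of_notMem_range _ m (by rintro ⟨n, rfl⟩; simp at hm; omega)

lemma LaurentPolynomial.coeff_mul_T (p : R[T;T⁻¹]) (n m : ℤ) :
    (p * T n).coeff m = p.coeff (m - n) := by
  rw [T, AddMonoidAlgebra.coeff_mul_single_apply, mul_one, sub_eq_add_neg]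

lemma LaurentPolynomial.coeff_C_mul (p : R[T;T⁻¹]) (r : R) (m : ℤ) :
    (LaurentPolynomial.C r * p).coeff m = r * p.coeff m :=
  AddMonoidAlgebra.coeff_single_zero_mul p r m

end Semiring

section CommSemiring

variable {R : Type*} [CommSemiring R]

lemma Polynomial.aeval_eq_aeval_divX_mul_add {A : Type*} [Semiring A] [Algebra R A]
    (x : A) (p : R[X]) :
    aeval x p = aeval x p.divX * x + algebraMap R A (p.coeff 0) := by
  conv_lhs => rw [← p.divX_mul_X_add]
  simp

lemma Polynomial.aeval_C_mul_T_neg_one (c : R) (p : R[X]) :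
    aeval (LaurentPolynomial.C c * T (-1)) p = invert (toLaurent (p.comp (C c * X))) := by
  rw [comp_eq_aeval, ← toLaurentAlg_apply, ← AlgEquiv.coe_toAlgHom, ← AlgHom.comp_apply,
    ← AlgHom.comp_apply, ← aeval_algHom]
  simp

end CommSemiring

namespace Susp

variable {R : Type*} [CommRing R] (f : R)

noncomputable def toLaurentPolynomial : Susp R f →ₐ[R] R[T;T⁻¹] :=
  Ideal.Quotient.liftₐ _ (aeval ![LaurentPolynomial.C f * T (-1), T 1]) fun p hp => by
    obtain ⟨q, rfl⟩ := Ideal.mem_span_singleton'.mp hp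
    rw [map_mul, map_sub, map_mul, aeval_X, aeval_X, aeval_C]
    simp only [Matrix.cons_val_zero, Matrix.cons_val_one]
    rw [mul_assoc, ← T_add]
    simp

@[simp]
lemma toLaurentPolynomial_suspU :
    toLaurentPolynomial f (suspU R f) = LaurentPolynomial.C f * T (-1) :=
  aeval_X _ 0

@[simp]
lemma toLaurentPolynomial_suspV : toLaurentPolynomial f (suspV R f) = T 1 :=
  aeval_X _ 1

lemma suspU_mul_suspV : suspU R f * suspV R f = algebraMap R (Susp R f) f := by
  rw [← map_mul]
  exact Ideal.Quotient.eq.mpr (Ideal.subset_span rfl)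

lemma suspV_ne_zero [Nontrivial R] : suspV R f ≠ 0 := fun h =>
  NeZero.ne (T 1 : R[T;T⁻¹]) (by simpa using congrArg (toLaurentPolynomial f) h)

lemma toLaurentPolynomial_aeval_suspU (p : R[X]) :
    toLaurentPolynomial f (Polynomial.aeval (suspU R f) p) =
      invert (Polynomial.toLaurent (p.comp (Polynomial.C f * Polynomial.X))) := by
  rw [← Polynomial.aeval_algHom_apply, toLaurentPolynomial_suspU,
    Polynomial.aeval_C_mul_T_neg_one]

lemma toLaurentPolynomial_aeval_suspV (p : R[X]) :
    toLaurentPolynomial f (Polynomial.aeval (suspV R f) p) = Polynomial.toLaurent p := by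
  rw [← Polynomial.aeval_algHom_apply, toLaurentPolynomial_suspV, ← Polynomial.toLaurent_X,
    ← Polynomial.toLaurentAlg_apply, Polynomial.aeval_algHom_apply, Polynomial.aeval_X_left_apply,
    Polynomial.toLaurentAlg_apply]

lemma exists_aeval_suspU_add_aeval_suspV (s : Susp R f) :
    ∃ p q : R[X], Polynomial.aeval (suspU R f) p + Polynomial.aeval (suspV R f) q = s := by
  obtain ⟨P, rfl⟩ := Ideal.Quotient.mk_surjective s
  induction P using MvPolynomial.induction_on with
  | C r => exact ⟨Polynomial.C r, 0, by rw [Polynomial.aeval_C, map_zero, add_zero]; rfl⟩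
  | add P Q hP hQ =>
    obtain ⟨p, q, hpq⟩ := hP
    obtain ⟨p', q', hpq'⟩ := hQ
    exact ⟨p + p', q + q', by simp only [map_add, ← hpq, ← hpq']; ring⟩
  | mul_X P i hP =>
    obtain ⟨p, q, hpq⟩ := hP
    rw [map_mul, ← hpq]
    obtain rfl | rfl : i = 0 ∨ i = 1 := by omega
    · refine ⟨p * Polynomial.X + Polynomial.C (q.coeff 0) * Polynomial.X,
        Polynomial.C f * q.divX, ?_⟩
      rw [Polynomial.aeval_eq_aeval_divX_mul_add (suspV R f) q]
      simp only [map_add, map_mul, Polynomial.aeval_X, Polynomial.aeval_C]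
      linear_combination -(Polynomial.aeval (suspV R f) q.divX) * suspU_mul_suspV f
    · refine ⟨Polynomial.C f * p.divX,
        q * Polynomial.X + Polynomial.C (p.coeff 0) * Polynomial.X, ?_⟩
      rw [Polynomial.aeval_eq_aeval_divX_mul_add (suspU R f) p]
      simp only [map_add, map_mul, Polynomial.aeval_X, Polynomial.aeval_C]
      linear_combination -(Polynomial.aeval (suspU R f) p.divX) * suspU_mul_suspV f

lemma toLaurentPolynomial_injective [IsDomain R] (hf : f ≠ 0) :
    Function.Injective (toLaurentPolynomial f) := by
  rw [injective_iff_map_eq_zero]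
  intro s hs
  obtain ⟨p, q, rfl⟩ := exists_aeval_suspU_add_aeval_suspV f s
  rw [map_add, toLaurentPolynomial_aeval_suspU, toLaurentPolynomial_aeval_suspV] at hs
  have hcoeff (m : ℤ) := congrArg (·.coeff m) hs
  have hp : ∀ n : ℕ, p.coeff (n + 1) = 0 := fun n => by
    have := hcoeff (-(n + 1 : ℕ))
    simp only [AddMonoidAlgebra.coeff_add, Finsupp.add_apply, invert_apply, neg_neg,
      Polynomial.coeff_toLaurent_natCast, Polynomial.comp_C_mul_X_coeff,
      Polynomial.coeff_toLaurent_of_neg q (by omega : -((n + 1 : ℕ) : ℤ) < 0)] at this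
    simpa [hf] using this
  have hq : ∀ n : ℕ, q.coeff (n + 1) = 0 := fun n => by
    have := hcoeff (n + 1 : ℕ)
    simp only [AddMonoidAlgebra.coeff_add, Finsupp.add_apply, invert_apply,
      Polynomial.coeff_toLaurent_natCast,
      Polynomial.coeff_toLaurent_of_neg _ (by omega : -((n + 1 : ℕ) : ℤ) < 0)] at this
    simpa using this
  have h0 : p.coeff 0 + q.coeff 0 = 0 := by
    have := hcoeff ((0 : ℕ) : ℤ)
    rw [AddMonoidAlgebra.coeff_add, Finsupp.add_apply, invert_apply, Nat.cast_zero, neg_zero,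
      ← Nat.cast_zero, Polynomial.coeff_toLaurent_natCast, Polynomial.coeff_toLaurent_natCast,
      Polynomial.comp_C_mul_X_coeff] at this
    simpa using this
  have hpC : p = Polynomial.C (p.coeff 0) := by
    ext (_ | n) <;> simp [hp, Polynomial.coeff_C]
  have hqC : q = Polynomial.C (q.coeff 0) := by
    ext (_ | n) <;> simp [hq, Polynomial.coeff_C]
  rw [hpC, hqC, Polynomial.aeval_C, Polynomial.aeval_C, ← map_add, h0, map_zero]

lemma isDomain [IsDomain R] (hf : f ≠ 0) : IsDomain (Susp R f) :=
  (toLaurentPolynomial_injective f hf).isDomain (toLaurentPolynomial f).toRingHom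

lemma mem_range_toLaurentPolynomial {Q : R[T;T⁻¹]} (hQ : ∀ k : ℕ, f ^ k ∣ Q.coeff (-k)) :
    Q ∈ (toLaurentPolynomial f).range := by
  rw [← AddMonoidAlgebra.sum_coeff_single Q]
  refine Subalgebra.sum_mem _ fun m _ => ?_
  rcases Int.eq_nat_or_neg m with ⟨n, rfl | rfl⟩
  · exact ⟨algebraMap R _ (Q.coeff n) * suspV R f ^ n, by simp [single_eq_C_mul_T, T_pow]⟩
  · obtain ⟨c, hc⟩ := hQ n
    exact ⟨algebraMap R _ c * suspU R f ^ n, by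
      simp [hc, mul_pow, T_pow, single_eq_C_mul_T, mul_left_comm, mul_assoc]⟩

lemma suspV_pow_dvd_of_mul_pow_eq [IsDomain R] (hf : f ≠ 0) {d : ℕ} {g h : Susp R f}
    (hg : g ∈ Algebra.adjoin R {suspU R f}) (hh : h ∈ Algebra.adjoin R {suspV R f})
    (hgh : g * suspV R f ^ d = h * suspU R f ^ d) : suspV R f ^ d ∣ h := by
  rw [Algebra.adjoin_singleton_eq_range_aeval, AlgHom.mem_range] at hg hh
  obtain ⟨p, rfl⟩ := hg
  obtain ⟨q, rfl⟩ := hh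
  set ψ := Polynomial.toLaurent q * T (-d)
  have hψ : LaurentPolynomial.C f ^ d * ψ =
      invert (Polynomial.toLaurent (p.comp (Polynomial.C f * Polynomial.X))) * T d := by
    have := congrArg (toLaurentPolynomial f) hgh
    simp only [map_mul, map_pow, toLaurentPolynomial_aeval_suspU, toLaurentPolynomial_aeval_suspV,
      toLaurentPolynomial_suspU, toLaurentPolynomial_suspV, mul_pow, T_pow, mul_one,
      mul_neg_one] at this
    linear_combination -this
  have hdvd (k : ℕ) : f ^ k ∣ ψ.coeff (-k) := by
    refine ⟨p.coeff (k + d), mul_left_cancel₀ (pow_ne_zero d hf) ?_⟩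
    have := congrArg (·.coeff (-k)) hψ
    simp only [ψ, ← map_pow, LaurentPolynomial.coeff_C_mul, coeff_mul_T, invert_apply] at this ⊢
    rw [this, show -(-(k : ℤ) - d) = ((k + d : ℕ) : ℤ) by push_cast; ring,
      Polynomial.coeff_toLaurent_natCast, Polynomial.comp_C_mul_X_coeff]
    ring
  obtain ⟨s, hs⟩ := (AlgHom.mem_range _).mp (mem_range_toLaurentPolynomial f hdvd)
  refine ⟨s, toLaurentPolynomial_injective f hf ?_⟩
  rw [map_mul, map_pow, hs, toLaurentPolynomial_aeval_suspV, toLaurentPolynomial_suspV, T_pow,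
    mul_one, mul_left_comm, ← T_add, add_neg_cancel, T_zero, mul_one]

end Susp

theorem mem_suspension_of_fractions_general (R : Type*) [CommRing R] [IsDomain R]
    (f : R) (hf0 : f ≠ 0)
    (φ : FractionRing (Susp R f)) (d : ℕ) (g h : Susp R f)
    (hg : g ∈ Algebra.adjoin R {suspU R f})
    (hh : h ∈ Algebra.adjoin R {suspV R f})
    (hgu : φ * algebraMap (Susp R f) (FractionRing (Susp R f)) ((suspU R f) ^ d) =
      algebraMap (Susp R f) (FractionRing (Susp R f)) g)
    (hhv : φ * algebraMap (Susp R f) (FractionRing (Susp R f)) ((suspV R f) ^ d) =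
      algebraMap (Susp R f) (FractionRing (Susp R f)) h) :
    φ ∈ (algebraMap (Susp R f) (FractionRing (Susp R f))).range := by
  have := Susp.isDomain f hf0
  have hinj := IsFractionRing.injective (Susp R f) (FractionRing (Susp R f))
  have hgh : g * suspV R f ^ d = h * suspU R f ^ d :=
    hinj (by rw [map_mul, map_mul, ← hgu, ← hhv]; ring)
  obtain ⟨s, rfl⟩ := Susp.suspV_pow_dvd_of_mul_pow_eq f hf0 hg hh hgh
  have hv : algebraMap (Susp R f) (FractionRing (Susp R f)) (suspV R f ^ d) ≠ 0 :=
    (map_ne_zero_iff _ hinj).mpr (pow_ne_zero d (Susp.suspV_ne_zero f))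
  exact ⟨s, mul_right_cancel₀ hv (by rw [hhv, map_mul]; exact mul_comm _ _)⟩

/-- Let `R` be an integrally closed domain, `f ∈ R` nonzero, and
`S = R[u,v]/(uv - f)`. If `φ ∈ Frac(S)` can be written as `g / u^d` with
`g ∈ R[u] ⊆ S` and as `h / v^d` with `h ∈ R[v] ⊆ S`, then `φ ∈ S`. -/
theorem mem_suspension_of_fractions (R : Type*) [CommRing R] [IsDomain R]
    [IsIntegrallyClosed R] (f : R) (hf0 : f ≠ 0)
    (φ : FractionRing (Susp R f)) (d : ℕ) (g h : Susp R f)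
    (hg : g ∈ Algebra.adjoin R {suspU R f})
    (hh : h ∈ Algebra.adjoin R {suspV R f})
    (hgu : φ * algebraMap (Susp R f) (FractionRing (Susp R f)) ((suspU R f) ^ d) =
      algebraMap (Susp R f) (FractionRing (Susp R f)) g)
    (hhv : φ * algebraMap (Susp R f) (FractionRing (Susp R f)) ((suspV R f) ^ d) =
      algebraMap (Susp R f) (FractionRing (Susp R f)) h) :
    φ ∈ (algebraMap (Susp R f) (FractionRing (Susp R f))).range :=
  mem_suspension_of_fractions_general R f hf0 φ d g h hg hh hgu hhv
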